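/- Given positive reals s₁, s₂, s₃, s₄ and the weights ω_k defined as ω₁ = √(s₂s₃s₄)/((√s₁+√s₃)(√(s₁s₃)+√(s₂s₄))), ω₂ = √(s₁s₃s₄)/((√s₂+√s₄)(√(s₁s₃)+√(s₂s₄))), ω₃ = √(s₁s₂s₄)/((√s₁+√s₃)(√(s₁s₃)+√(s₂s₄))), ω₄ = √(s₁s₂s₃)/((√s₂+√s₄)(√(s₁s₃)+√(s₂s₄))), the second-moment matching condition ω₁ s₁ - ω₂ s₂ + ω₃ s₃ - ω₄ s₄ = 0 holds. -/

import Mathlib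

/-!
Writing `sᵢ = aᵢ²` with `aᵢ = √sᵢ > 0`, all weights become rational in `a₁, …, a₄`, and the
odd-indexed and even-indexed terms each contribute `a₁a₂a₃a₄ / (a₁a₃ + a₂a₄)`, so they cancel.
-/

theorem second_moment_weights_eq_zero {K : Type*} [Field K] {a b c d : K}
    (hac : a + c ≠ 0) (hbd : b + d ≠ 0) :
    b * c * d / ((a + c) * (a * c + b * d)) * a ^ 2 - a * c * d / ((b + d) * (a * c + b * d)) * b ^ 2
      + a * b * d / ((a + c) * (a * c + b * d)) * c ^ 2
      - a * b * c / ((b + d) * (a * c + b * d)) * d ^ 2 = 0 := by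
  have odd_terms : b * c * d / ((a + c) * (a * c + b * d)) * a ^ 2
      + a * b * d / ((a + c) * (a * c + b * d)) * c ^ 2 = a * b * c * d / (a * c + b * d) := by
    field_simp
  have even_terms : a * c * d / ((b + d) * (a * c + b * d)) * b ^ 2
      + a * b * c / ((b + d) * (a * c + b * d)) * d ^ 2 = a * b * c * d / (a * c + b * d) := by
    field_simp
  linear_combination odd_terms - even_terms

theorem exists_pos_sq_eq {s : ℝ} (hs : 0 < s) : ∃ a : ℝ, 0 < a ∧ a ^ 2 = s :=
  ⟨√s, Real.sqrt_pos.2 hs, Real.sq_sqrt hs.le⟩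

theorem stmt3 (s₁ s₂ s₃ s₄ : ℝ) (h₁ : 0 < s₁) (h₂ : 0 < s₂) (h₃ : 0 < s₃) (h₄ : 0 < s₄)
    (ω₁ ω₂ ω₃ ω₄ : ℝ)
    (hω₁ : ω₁ = Real.sqrt (s₂*s₃*s₄) / ((Real.sqrt s₁ + Real.sqrt s₃) * (Real.sqrt (s₁*s₃) + Real.sqrt (s₂*s₄))))
    (hω₂ : ω₂ = Real.sqrt (s₁*s₃*s₄) / ((Real.sqrt s₂ + Real.sqrt s₄) * (Real.sqrt (s₁*s₃) + Real.sqrt (s₂*s₄))))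
    (hω₃ : ω₃ = Real.sqrt (s₁*s₂*s₄) / ((Real.sqrt s₁ + Real.sqrt s₃) * (Real.sqrt (s₁*s₃) + Real.sqrt (s₂*s₄))))
    (hω₄ : ω₄ = Real.sqrt (s₁*s₂*s₃) / ((Real.sqrt s₂ + Real.sqrt s₄) * (Real.sqrt (s₁*s₃) + Real.sqrt (s₂*s₄)))) :
    ω₁ * s₁ - ω₂ * s₂ + ω₃ * s₃ - ω₄ * s₄ = 0 := by
  obtain ⟨a, ha, rfl⟩ := exists_pos_sq_eq h₁
  obtain ⟨b, hb, rfl⟩ := exists_pos_sq_eq h₂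
  obtain ⟨c, hc, rfl⟩ := exists_pos_sq_eq h₃
  obtain ⟨d, hd, rfl⟩ := exists_pos_sq_eq h₄
  subst hω₁ hω₂ hω₃ hω₄
  simp only [← mul_pow, Real.sqrt_sq_eq_abs, abs_mul, abs_of_pos, ha, hb, hc, hd]
  exact second_moment_weights_eq_zero (add_pos ha hc).ne' (add_pos hb hd).ne'
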